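/- arXiv:2310.07369 — 3 statements merged into one kernel-verified Lean document; each statement's English description precedes it below -/
import Mathlib

section
/- Let 1 ≤ m ≤ n. Then either Γ_+^m ⊂ Γ or Γ_+^m ∩ Γ = ∅. -/
/-!
If some `x ∈ Γ_+^m` lies in `Γ`, then for any `y ∈ Γ_+^m` a permutation `xσ` of `x` has the same
positive coordinates as `y`, and `xσ ∈ Γ` by symmetry. For small `c > 0` we get `c • xσ ≤ y`
coordinatewise, and `y = c • xσ + (y - c • xσ) ∈ Γ`, because an open convex cone containing the
positive cone is stable under adding nonnegative vectors.
-/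

noncomputable section

/-- `ℝ^n` with the Euclidean norm. -/
abbrev EV (n : ℕ) := EuclideanSpace ℝ (Fin n)

/-- The positive cone `ℝ^n_+`. -/
def posCone (n : ℕ) : Set (EV n) := {x | ∀ i, 0 < x i}

/-- `Γ_+^m`: nonnegative vectors with exactly `m` positive coordinates (the remaining
`n - m` coordinates vanish); equivalently, all permutations of `(0,…,0,λ₁,…,λ_m)`
with every `λ_i > 0`. -/
def gammaPlus (n m : ℕ) : Set (EV n) :=
  {x | (∀ i, 0 ≤ x i) ∧ (Finset.univ.filter fun i => 0 < x i).card = m}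

/-- Invariance under permutations of coordinates. -/
def PermSymm {n : ℕ} (Γ : Set (EV n)) : Prop :=
  ∀ (σ : Equiv.Perm (Fin n)) (x : EV n), x ∈ Γ → (WithLp.toLp 2 (fun i => x (σ i)) : EV n) ∈ Γ

/-- `Γ` is a cone. -/
def IsConeSet {n : ℕ} (Γ : Set (EV n)) : Prop :=
  ∀ c : ℝ, 0 < c → ∀ x ∈ Γ, c • x ∈ Γ

open Filter Topology

namespace IsConeSet

variable {n : ℕ} {Γ : Set (EV n)}

theorem add_mem (hΓ : IsConeSet Γ) (hΓc : Convex ℝ Γ) {a b : EV n} (ha : a ∈ Γ) (hb : b ∈ Γ) :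
    a + b ∈ Γ := by
  have hmid := hΓ 2 two_pos _ (hΓc ha hb (by norm_num) (by norm_num) (add_halves 1))
  rwa [smul_add, smul_smul, smul_smul, mul_one_div_cancel two_ne_zero, one_smul, one_smul]
    at hmid

/-- Openness lets `a` absorb a small negative multiple of `(1, …, 1)`, which the positive cone
then pays back together with `q`. -/
theorem add_mem_of_nonneg (hΓ : IsConeSet Γ) (hΓc : Convex ℝ Γ) (hΓo : IsOpen Γ)
    (hΓpos : posCone n ⊆ Γ) {a q : EV n} (ha : a ∈ Γ) (hq : ∀ i, 0 ≤ q i) : a + q ∈ Γ := by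
  set u : EV n := WithLp.toLp 2 fun _ => 1
  have hshift : ∀ᶠ t in 𝓝[>] (0 : ℝ), a - t • u ∈ Γ :=
    nhdsWithin_le_nhds <| ((continuous_const.sub (continuous_id.smul continuous_const)).tendsto'
      0 a (by simp)).eventually (hΓo.mem_nhds ha)
  obtain ⟨t, hta, ht⟩ := (hshift.and self_mem_nhdsWithin).exists
  have hpos : q + t • u ∈ posCone n := fun i => by
    simpa [u] using add_pos_of_nonneg_of_pos (hq i) (Set.mem_Ioi.mp ht)
  simpa using hΓ.add_mem hΓc hta (hΓpos hpos)

end IsConeSet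

theorem exists_pos_smul_le {ι : Type*} [Finite ι] {x y : ι → ℝ} (hy : ∀ i, 0 ≤ y i)
    (hxy : ∀ i, 0 < x i → 0 < y i) : ∃ c > 0, ∀ i, c * x i ≤ y i := by
  have hsmall : ∀ i, ∀ᶠ c in 𝓝[>] (0 : ℝ), c * x i ≤ y i := by
    intro i
    rcases (hy i).lt_or_eq with hyi | hyi
    · exact nhdsWithin_le_nhds <| (((continuous_id.mul continuous_const).tendsto' 0 0
        (by simp)).eventually (gt_mem_nhds hyi)).mono fun c hc => hc.le
    · have hxi : x i ≤ 0 := not_lt.mp fun hxi => (hxy i hxi).ne' hyi.symm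
      filter_upwards [self_mem_nhdsWithin] with c hc
      rw [← hyi]
      exact mul_nonpos_of_nonneg_of_nonpos (Set.mem_Ioi.mp hc).le hxi
  obtain ⟨c, hc, hpos⟩ := ((Filter.eventually_all.mpr hsmall).and self_mem_nhdsWithin).exists
  exact ⟨c, hpos, hc⟩

theorem exists_perm_pos_iff_of_mem_gammaPlus {n m : ℕ} {x y : EV n} (hx : x ∈ gammaPlus n m)
    (hy : y ∈ gammaPlus n m) : ∃ σ : Equiv.Perm (Fin n), ∀ i, 0 < y i ↔ 0 < x (σ i) := by
  have hcard : Fintype.card {i // 0 < y i} = Fintype.card {i // 0 < x i} := by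
    rw [Fintype.card_subtype, Fintype.card_subtype, hx.2, hy.2]
  let e := Fintype.equivOfCardEq hcard
  exact ⟨e.extendSubtype, fun i => ⟨e.extendSubtype_mem i,
    fun h => not_not.mp fun hi => e.extendSubtype_not_mem i hi h⟩⟩

theorem stmt0_general (n : ℕ) (Γ : Set (EV n))
    (hΓo : IsOpen Γ) (hΓs : PermSymm Γ) (hΓc : Convex ℝ Γ)
    (hΓcone : IsConeSet Γ) (hΓpos : posCone n ⊆ Γ)
    (m : ℕ) :
    gammaPlus n m ⊆ Γ ∨ gammaPlus n m ∩ Γ = ∅ := by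
  refine or_iff_not_imp_right.mpr fun hne y hy => ?_
  obtain ⟨x, hx, hxΓ⟩ := Set.nonempty_iff_ne_empty.mpr hne
  obtain ⟨σ, hσ⟩ := exists_perm_pos_iff_of_mem_gammaPlus hx hy
  set xσ : EV n := WithLp.toLp 2 fun i => x (σ i)
  obtain ⟨c, hc, hcle⟩ := exists_pos_smul_le (x := fun i => xσ i) hy.1 fun i => (hσ i).mpr
  have hrest : ∀ i, 0 ≤ (y - c • xσ) i := fun i => by simpa using hcle i
  have hsum := hΓcone.add_mem_of_nonneg hΓc hΓo hΓpos (hΓcone c hc xσ (hΓs σ x hxΓ)) hrest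
  rwa [add_sub_cancel] at hsum

/-- For `1 ≤ m ≤ n`, either `Γ_+^m ⊆ Γ` or `Γ_+^m ∩ Γ = ∅`. -/
theorem stmt0 (n : ℕ) (hn : 2 ≤ n) (Γ : Set (EV n))
    (hΓo : IsOpen Γ) (hΓs : PermSymm Γ) (hΓc : Convex ℝ Γ)
    (hΓcone : IsConeSet Γ) (hΓpos : posCone n ⊆ Γ)
    (m : ℕ) (hm1 : 1 ≤ m) (hm2 : m ≤ n) :
    gammaPlus n m ⊆ Γ ∨ gammaPlus n m ∩ Γ = ∅ :=
  stmt0_general n Γ hΓo hΓs hΓc hΓcone hΓpos m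
end
end

section
/- The map λ ↦ −γ(λ_1^{-1},...,λ_n^{-1}) is concave on the positive cone ℝ^n_+ if and only if the map A ↦ −γ(A^{-1}) is concave on the set of positive-definite symmetric n×n matrices. -/
noncomputable section

/-- Embed `(λ₁,…,λ_m) ∈ ℝ^m` into `ℝ^n` as `(0,…,0,λ₁,…,λ_m)` (with `n - m` zeros). -/
def padZero (n m : ℕ) (x : Fin m → ℝ) : EV n :=
  WithLp.toLp 2 (fun i : Fin n => if h : (i : ℕ) < n - m then 0 else x ⟨(i : ℕ) - (n - m), by omega⟩)

/-- The positive cone `ℝ^m_+` (plain function version). -/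
def posConeP (m : ℕ) : Set (Fin m → ℝ) := {x | ∀ i, 0 < x i}

/-- `f` is inverse-concave: `λ ↦ -f(λ₁⁻¹,…,λ_m⁻¹)` is concave on `ℝ^m_+`. -/
def InvConcave (m : ℕ) (f : (Fin m → ℝ) → ℝ) : Prop :=
  ConcaveOn ℝ (posConeP m) (fun x => - f (fun i => (x i)⁻¹))

/-- `f` is strictly inverse-concave: `λ ↦ -f(λ₁⁻¹,…,λ_m⁻¹)` is strictly concave on `ℝ^m_+`. -/
def StrictInvConcave (m : ℕ) (f : (Fin m → ℝ) → ℝ) : Prop :=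
  StrictConcaveOn ℝ (posConeP m) (fun x => - f (fun i => (x i)⁻¹))

/-- First derivative of a matrix function contracted against `B`:
`γ̇^{ij}(A) B_{ij} = (d/ds)|_{s=0} γ(A + sB)`. -/
def D1 {n : ℕ} (f : Matrix (Fin n) (Fin n) ℝ → ℝ) (A B : Matrix (Fin n) (Fin n) ℝ) : ℝ :=
  deriv (fun s : ℝ => f (A + s • B)) 0

/-- Second derivative of a matrix function contracted against `B, C`:
`γ̈^{ij,kl}(A) B_{ij} C_{kl} = ∂_s ∂_t|_{s=t=0} γ(A + sB + tC)`. -/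
def D2 {n : ℕ} (f : Matrix (Fin n) (Fin n) ℝ → ℝ)
    (A B C : Matrix (Fin n) (Fin n) ℝ) : ℝ :=
  deriv (fun s : ℝ => deriv (fun t : ℝ => f (A + s • B + t • C)) 0) 0

/-- Squared Frobenius norm `|S|² = Σ_{ij} S_{ij}²`. -/
def frobSq {n : ℕ} (S : Matrix (Fin n) (Fin n) ℝ) : ℝ := ∑ i, ∑ j, S i j ^ 2

open Matrix Polynomial Finset

section Helpers

variable {n : ℕ}

/-- From equality of multisets of values, get a permutation. -/
lemma exists_perm_of_multiset_eq {α : Type*} [LinearOrder α] {f g : Fin n → α}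
    (h : (List.ofFn f : Multiset α) = (List.ofFn g : Multiset α)) :
    ∃ σ : Equiv.Perm (Fin n), ∀ i, f i = g (σ i) := by
  have hp : List.Perm (List.ofFn f) (List.ofFn g) := Multiset.coe_eq_coe.mp h
  have h1 : List.Perm (List.ofFn (f ∘ Tuple.sort f)) (List.ofFn (g ∘ Tuple.sort g)) :=
    ((Equiv.Perm.ofFn_comp_perm (Tuple.sort f) f).trans hp).trans
      (Equiv.Perm.ofFn_comp_perm (Tuple.sort g) g).symm
  have h2 : List.ofFn (f ∘ Tuple.sort f) = List.ofFn (g ∘ Tuple.sort g) :=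
    List.Perm.eq_of_sortedLE (Tuple.monotone_sort f).sortedLE_ofFn
      (Tuple.monotone_sort g).sortedLE_ofFn h1
  have h3 : f ∘ Tuple.sort f = g ∘ Tuple.sort g := List.ofFn_injective h2
  refine ⟨(Tuple.sort f).symm.trans (Tuple.sort g), fun i => ?_⟩
  have := congrFun h3 ((Tuple.sort f).symm i)
  simpa using this

lemma charmatrix_diagonal (d : Fin n → ℝ) :
    charmatrix (diagonal d) = diagonal (fun i => (X : ℝ[X]) - C (d i)) := by
  ext i j
  by_cases h : i = j
  · subst h; simp [charmatrix_apply_eq]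
  · simp [charmatrix_apply_ne _ _ _ h, diagonal_apply_ne _ h, diagonal_apply_ne' _ h]

lemma charpoly_diagonal' (d : Fin n → ℝ) :
    (diagonal d).charpoly = ∏ i, ((X : ℝ[X]) - C (d i)) := by
  rw [Matrix.charpoly, charmatrix_diagonal, det_diagonal]

lemma charpoly_unitary_conj (U : Matrix.unitaryGroup (Fin n) ℝ) (M : Matrix (Fin n) (Fin n) ℝ) :
    ((U : Matrix (Fin n) (Fin n) ℝ) * M * star (U : Matrix (Fin n) (Fin n) ℝ)).charpoly
      = M.charpoly := by
  have hU : (U : Matrix (Fin n) (Fin n) ℝ) * star (U : Matrix (Fin n) (Fin n) ℝ) = 1 :=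
    by rw [← Unitary.coe_star]; exact Unitary.coe_mul_star_self U
  have hU' : star (U : Matrix (Fin n) (Fin n) ℝ) * (U : Matrix (Fin n) (Fin n) ℝ) = 1 :=
    by rw [← Unitary.coe_star]; exact Unitary.coe_star_mul_self U
  set φ : Matrix (Fin n) (Fin n) ℝ →+* Matrix (Fin n) (Fin n) ℝ[X] := (C : ℝ →+* ℝ[X]).mapMatrix
  have key : charmatrix ((U : Matrix (Fin n) (Fin n) ℝ) * M * star (U : Matrix (Fin n) (Fin n) ℝ))
      = φ U * charmatrix M * φ (star U) := by
    rw [charmatrix]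
    rw [charmatrix]
    rw [mul_sub, sub_mul]
    congr 1
    · rw [show φ ↑U * (Matrix.scalar (Fin n)) X * φ (star ↑U)
          = (Matrix.scalar (Fin n)) X * (φ ↑U * φ (star ↑U)) from by
        rw [← (Matrix.scalar_commute X (Commute.all X) (φ ↑U)).eq, mul_assoc]]
      rw [← φ.map_mul, hU, φ.map_one, mul_one]
    · rw [φ.map_mul, φ.map_mul]
  have hdet : (φ ↑U).det * (φ (star ↑U)).det = 1 := by
    rw [← det_mul, ← φ.map_mul, hU, φ.map_one, det_one]
  rw [Matrix.charpoly, key, det_mul, det_mul, mul_right_comm, hdet, one_mul, Matrix.charpoly]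

/-- eigenvalues of a Hermitian matrix conjugate to a diagonal matrix are a permutation
of the diagonal entries. -/
lemma eig_perm_of_conj_diag {A : Matrix (Fin n) (Fin n) ℝ} (hA : A.IsHermitian)
    (U : Matrix.unitaryGroup (Fin n) ℝ) (d : Fin n → ℝ)
    (h : A = (U : Matrix (Fin n) (Fin n) ℝ) * diagonal d * star (U : Matrix (Fin n) (Fin n) ℝ)) :
    ∃ σ : Equiv.Perm (Fin n), ∀ i, hA.eigenvalues i = d (σ i) := by
  have hs : A = (hA.eigenvectorUnitary : Matrix (Fin n) (Fin n) ℝ) * diagonal hA.eigenvalues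
      * star (hA.eigenvectorUnitary : Matrix (Fin n) (Fin n) ℝ) := by
    have := hA.spectral_theorem
    rwa [Unitary.conjStarAlgAut_apply, RCLike.ofReal_real_eq_id, Function.id_comp] at this
  have h1 : (diagonal hA.eigenvalues).charpoly = (diagonal d).charpoly := by
    rw [← charpoly_unitary_conj hA.eigenvectorUnitary (diagonal hA.eigenvalues), ← hs, h,
      charpoly_unitary_conj]
  rw [charpoly_diagonal', charpoly_diagonal'] at h1
  have key : ∀ v : Fin n → ℝ, (∏ i, ((X : ℝ[X]) - C (v i)))
      = (Multiset.map (fun a => (X : ℝ[X]) - C a) (List.ofFn v : Multiset ℝ)).prod := by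
    intro v
    rw [← Fin.univ_val_map, Multiset.map_map, Finset.prod_eq_multiset_prod]
    rfl
  have h2 : (List.ofFn hA.eigenvalues : Multiset ℝ) = (List.ofFn d : Multiset ℝ) := by
    have := congrArg Polynomial.roots h1
    rwa [key, key, Polynomial.roots_multiset_prod_X_sub_C,
      Polynomial.roots_multiset_prod_X_sub_C] at this
  exact exists_perm_of_multiset_eq h2

/-- Diagonal entries of `star V * A * V` for positive definite `A` are positive. -/
lemma conj_diag_entry_pos {A : Matrix (Fin n) (Fin n) ℝ} (hA : A.PosDef)
    (V : Matrix.unitaryGroup (Fin n) ℝ) (i : Fin n) :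
    0 < (star (V : Matrix (Fin n) (Fin n) ℝ) * A * (V : Matrix (Fin n) (Fin n) ℝ)) i i := by
  set c : Fin n → ℝ := fun k => (V : Matrix (Fin n) (Fin n) ℝ) k i with hc
  have hVV : star (V : Matrix (Fin n) (Fin n) ℝ) * (V : Matrix (Fin n) (Fin n) ℝ) = 1 := by
    rw [← Unitary.coe_star]; exact Unitary.coe_star_mul_self V
  have hsum : ∑ k, c k * c k = 1 := by
    have := congrFun (congrFun hVV i) i
    simpa [Matrix.mul_apply, Matrix.conjTranspose_apply, Matrix.one_apply, hc] using this
  have hcne : c ≠ 0 := by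
    intro h
    rw [h] at hsum
    simp at hsum
  have hpos := hA.dotProduct_mulVec_pos hcne
  have hrw : (star (V : Matrix (Fin n) (Fin n) ℝ) * A * (V : Matrix (Fin n) (Fin n) ℝ)) i i
      = star c ⬝ᵥ (A *ᵥ c) := by
    simp only [Matrix.mul_apply, Matrix.conjTranspose_apply, dotProduct, Matrix.mulVec,
      star_trivial, Pi.star_apply, Finset.sum_mul]
    rw [Finset.sum_comm]
    refine Finset.sum_congr rfl fun k _ => ?_
    rw [Finset.mul_sum]
    refine Finset.sum_congr rfl fun l _ => ?_
    simp only [Matrix.star_apply, star_trivial]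
    ring
  rw [hrw]
  exact hpos

/-- Diagonal entries of a conjugated diagonal matrix. -/
lemma conj_diag_entry_eq (Q : Matrix (Fin n) (Fin n) ℝ) (d : Fin n → ℝ) (i : Fin n) :
    (Q * diagonal d * star Q) i i = ∑ k, (Q i k) ^ 2 * d k := by
  rw [Matrix.mul_apply]
  refine Finset.sum_congr rfl fun k _ => ?_
  rw [Matrix.mul_diagonal]
  simp only [Matrix.star_apply, star_trivial]
  ring

/-- Squared entries of an orthogonal matrix form a doubly stochastic matrix. -/
lemma sq_unitary_mem_doublyStochastic {Q : Matrix (Fin n) (Fin n) ℝ}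
    (hQ : Q ∈ Matrix.unitaryGroup (Fin n) ℝ) :
    (Matrix.of fun i k => (Q i k) ^ 2) ∈ doublyStochastic ℝ (Fin n) := by
  rw [mem_doublyStochastic_iff_sum]
  refine ⟨fun i j => sq_nonneg _, fun i => ?_, fun k => ?_⟩
  · have := congrFun (congrFun hQ.2 i) i
    simpa [Matrix.mul_apply, Matrix.conjTranspose_apply, Matrix.one_apply, sq] using this
  · have := congrFun (congrFun hQ.1 k) k
    simpa [Matrix.mul_apply, Matrix.conjTranspose_apply, Matrix.one_apply, sq] using this

lemma permMatrix_mulVec (σ : Equiv.Perm (Fin n)) (v : Fin n → ℝ) :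
    (σ.permMatrix ℝ) *ᵥ v = fun i => v (σ i) := by
  ext i
  simp [Matrix.mulVec, dotProduct, Equiv.Perm.permMatrix, PEquiv.toMatrix_apply,
    Equiv.toPEquiv_apply]

/-- Jensen + Birkhoff: applying a doubly stochastic matrix increases a symmetric
concave function on the positive cone. -/
lemma schur_horn_ineq {f : (Fin n → ℝ) → ℝ}
    (hf : ConcaveOn ℝ {x : Fin n → ℝ | ∀ i, 0 < x i} f)
    (hsym : ∀ σ : Equiv.Perm (Fin n), ∀ x : Fin n → ℝ, (∀ i, 0 < x i) →
      f (fun i => x (σ i)) = f x)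
    {S : Matrix (Fin n) (Fin n) ℝ} (hS : S ∈ doublyStochastic ℝ (Fin n))
    {lam : Fin n → ℝ} (hlam : ∀ i, 0 < lam i) : f lam ≤ f (S *ᵥ lam) := by
  obtain ⟨w, hw0, hw1, hwS⟩ := exists_eq_sum_perm_of_mem_doublyStochastic hS
  have hSv : S *ᵥ lam = ∑ σ : Equiv.Perm (Fin n), w σ • (fun i => lam (σ i)) := by
    rw [← hwS]
    ext i
    simp only [Matrix.mulVec, dotProduct, Matrix.sum_apply, Finset.sum_apply, Matrix.smul_apply,
      Pi.smul_apply, smul_eq_mul, Finset.sum_mul]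
    rw [Finset.sum_comm]
    refine Finset.sum_congr rfl fun σ _ => ?_
    simp [Equiv.Perm.permMatrix, PEquiv.toMatrix_apply, Equiv.toPEquiv_apply, mul_ite,
      mul_comm, mul_assoc]
  have hmem : ∀ σ : Equiv.Perm (Fin n), σ ∈ (Finset.univ : Finset (Equiv.Perm (Fin n))) →
      (fun i => lam (σ i)) ∈ {x : Fin n → ℝ | ∀ i, 0 < x i} := by
    intro σ _ i; exact hlam _
  have := hf.le_map_sum (fun σ _ => hw0 σ) hw1 hmem
  rw [← hSv] at this
  calc f lam = ∑ σ : Equiv.Perm (Fin n), w σ • f (fun i => lam (σ i)) := by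
        simp_rw [fun σ : Equiv.Perm (Fin n) => hsym σ lam hlam]
        rw [← Finset.sum_smul, hw1, one_smul]
    _ ≤ f (S *ᵥ lam) := this

lemma spectral_real {A : Matrix (Fin n) (Fin n) ℝ} (hA : A.IsHermitian) :
    A = (hA.eigenvectorUnitary : Matrix (Fin n) (Fin n) ℝ) * diagonal hA.eigenvalues
      * star (hA.eigenvectorUnitary : Matrix (Fin n) (Fin n) ℝ) := by
  have := hA.spectral_theorem
  rwa [Unitary.conjStarAlgAut_apply, RCLike.ofReal_real_eq_id, Function.id_comp] at this

lemma star_mul_self_mul_real {A : Matrix (Fin n) (Fin n) ℝ} (hA : A.IsHermitian) :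
    star (hA.eigenvectorUnitary : Matrix (Fin n) (Fin n) ℝ) * A
      * (hA.eigenvectorUnitary : Matrix (Fin n) (Fin n) ℝ) = diagonal hA.eigenvalues := by
  have := hA.conjStarAlgAut_star_eigenvectorUnitary
  rwa [Unitary.conjStarAlgAut_apply, Unitary.coe_star, star_star, RCLike.ofReal_real_eq_id,
    Function.id_comp] at this

lemma posdef_smul {A : Matrix (Fin n) (Fin n) ℝ} (hA : A.PosDef) {c : ℝ} (hc : 0 < c) :
    (c • A).PosDef := by
  exact hA.smul hc

lemma inv_spectral {A : Matrix (Fin n) (Fin n) ℝ} (hA : A.PosDef) :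
    A⁻¹ = (hA.1.eigenvectorUnitary : Matrix (Fin n) (Fin n) ℝ)
      * diagonal (fun i => (hA.1.eigenvalues i)⁻¹)
      * star (hA.1.eigenvectorUnitary : Matrix (Fin n) (Fin n) ℝ) := by
  apply Matrix.inv_eq_right_inv
  set V := (hA.1.eigenvectorUnitary : Matrix (Fin n) (Fin n) ℝ)
  have hVV : star V * V = 1 := by
    rw [← Unitary.coe_star]; exact Unitary.coe_star_mul_self _
  have hVV' : V * star V = 1 := by
    rw [← Unitary.coe_star]; exact Unitary.coe_mul_star_self _
  have hdd : diagonal hA.1.eigenvalues * diagonal (fun i => (hA.1.eigenvalues i)⁻¹)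
      = (1 : Matrix (Fin n) (Fin n) ℝ) := by
    rw [Matrix.diagonal_mul_diagonal]
    have : (fun i => hA.1.eigenvalues i * (hA.1.eigenvalues i)⁻¹) = fun _ => (1:ℝ) := by
      funext i
      exact mul_inv_cancel₀ (hA.eigenvalues_pos i).ne'
    rw [this, Matrix.diagonal_one]
  have main : (V * diagonal hA.1.eigenvalues * star V)
      * (V * diagonal (fun i => (hA.1.eigenvalues i)⁻¹) * star V) = 1 := by
    simp only [Matrix.mul_assoc]
    rw [show star V * (V * (diagonal (fun i => (hA.1.eigenvalues i)⁻¹) * star V))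
        = diagonal (fun i => (hA.1.eigenvalues i)⁻¹) * star V from by
      rw [← Matrix.mul_assoc, hVV, Matrix.one_mul]]
    rw [show diagonal hA.1.eigenvalues * (diagonal (fun i => (hA.1.eigenvalues i)⁻¹) * star V)
        = star V from by rw [← Matrix.mul_assoc, hdd, Matrix.one_mul]]
    exact hVV'
  rw [← spectral_real hA.1] at main
  exact main

lemma eig_inv_perm {A : Matrix (Fin n) (Fin n) ℝ} (hA : A.PosDef) :
    ∃ σ : Equiv.Perm (Fin n), ∀ i,
      (hA.inv.1).eigenvalues i = (hA.1.eigenvalues (σ i))⁻¹ :=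
  eig_perm_of_conj_diag hA.inv.1 hA.1.eigenvectorUnitary _ (inv_spectral hA)

lemma eig_diagonal_perm {d : Fin n → ℝ} (hd : (diagonal d).IsHermitian) :
    ∃ σ : Equiv.Perm (Fin n), ∀ i, hd.eigenvalues i = d (σ i) := by
  refine eig_perm_of_conj_diag hd 1 d ?_
  simp

end Helpers

/-- `λ ↦ -γ(λ⁻¹)` is concave on `ℝ^n_+` iff `A ↦ -γ(A⁻¹)` is concave on
positive-definite symmetric matrices. -/
theorem stmt8
    (n : ℕ) (hn : 2 ≤ n)
    (Γ : Set (EV n)) (hΓo : IsOpen Γ) (hΓs : PermSymm Γ) (hΓc : Convex ℝ Γ)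
    (hΓcone : IsConeSet Γ) (hΓpos : posCone n ⊆ Γ)
    (γ : EV n → ℝ)
    (hγsm : ContDiffOn ℝ (⊤ : ℕ∞) γ Γ)
    (hγpos : ∀ x ∈ Γ, 0 < γ x)
    (hγsymm : ∀ (σ : Equiv.Perm (Fin n)), ∀ x ∈ Γ, γ (WithLp.toLp 2 (fun i => x (σ i)) : EV n) = γ x)
    (hγmono : ∀ x ∈ Γ, ∀ (i : Fin n) (t : ℝ), 0 < t →
      (WithLp.toLp 2 (fun j => if j = i then x j + t else x j) : EV n) ∈ Γ →
      γ x < γ (WithLp.toLp 2 (fun j => if j = i then x j + t else x j) : EV n))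
    (hγhom : ∀ c : ℝ, 0 < c → ∀ x ∈ Γ, γ (c • x) = c * γ x)
    (γM : Matrix (Fin n) (Fin n) ℝ → ℝ)
    (hcompat : ∀ (A : Matrix (Fin n) (Fin n) ℝ) (hA : A.IsHermitian),
      (WithLp.toLp 2 hA.eigenvalues : EV n) ∈ Γ → γM A = γ (WithLp.toLp 2 hA.eigenvalues : EV n))
    (hMsm : ∀ (A B C : Matrix (Fin n) (Fin n) ℝ) (hA : A.IsHermitian),
      (WithLp.toLp 2 hA.eigenvalues : EV n) ∈ Γ → B.IsHermitian → C.IsHermitian →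
      ContDiffAt ℝ (⊤ : ℕ∞) (fun p : ℝ × ℝ => γM (A + p.1 • B + p.2 • C)) 0)
    :
    ConcaveOn ℝ (posCone n) (fun x : EV n => - γ (WithLp.toLp 2 (fun i => (x i)⁻¹) : EV n)) ↔
    ConcaveOn ℝ {A : Matrix (Fin n) (Fin n) ℝ | A.PosDef}
      (fun A => - γM A⁻¹) := by
  classical
  set g : (Fin n → ℝ) → ℝ := fun x => - γ (WithLp.toLp 2 (fun i => (x i)⁻¹) : EV n) with hg_def
  have hγperm : ∀ (σ : Equiv.Perm (Fin n)) (x : Fin n → ℝ), (∀ i, 0 < x i) →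
      γ (WithLp.toLp 2 (fun i => x (σ i)) : EV n) = γ (WithLp.toLp 2 x : EV n) :=
    fun σ x hx => hγsymm σ (WithLp.toLp 2 x) (hΓpos hx)
  have hγeig : ∀ {B : Matrix (Fin n) (Fin n) ℝ} (hB : B.IsHermitian) (d : Fin n → ℝ),
      (∀ i, 0 < d i) → (∃ σ : Equiv.Perm (Fin n), ∀ i, hB.eigenvalues i = d (σ i)) →
      γM B = γ (WithLp.toLp 2 d : EV n) := by
    rintro B hB d hd ⟨σ, hσ⟩
    have hpos : ∀ i, 0 < hB.eigenvalues i := fun i => hσ i ▸ hd (σ i)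
    have hmem : (WithLp.toLp 2 hB.eigenvalues : EV n) ∈ Γ := hΓpos (show _ ∈ posCone n from hpos)
    rw [hcompat B hB hmem, show hB.eigenvalues = fun i => d (σ i) from funext hσ,
      hγperm σ d hd]
  have hval : ∀ {A : Matrix (Fin n) (Fin n) ℝ} (hA : A.PosDef),
      - γM A⁻¹ = g (hA.1.eigenvalues) := by
    intro A hA
    have h1 : γM A⁻¹ = γ (WithLp.toLp 2 (fun i => (hA.1.eigenvalues i)⁻¹) : EV n) :=
      hγeig hA.inv.1 _ (fun i => inv_pos.mpr (hA.eigenvalues_pos i)) (eig_inv_perm hA)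
    rw [h1]
  have hgsym : ∀ (σ : Equiv.Perm (Fin n)) (x : Fin n → ℝ), (∀ i, 0 < x i) →
      g (fun i => x (σ i)) = g x := by
    intro σ x hx
    show - γ (WithLp.toLp 2 (fun i => (x (σ i))⁻¹) : EV n) = - γ (WithLp.toLp 2 (fun i => (x i)⁻¹) : EV n)
    rw [show (fun i => (x (σ i))⁻¹) = (fun i => ((fun j => (x j)⁻¹) (σ i))) from rfl,
      hγperm σ _ (fun i => inv_pos.mpr (hx i))]
  constructor
  · -- eigenvalue concavity ⇒ matrix concavity
    intro hcv
    have hg : ConcaveOn ℝ {x : Fin n → ℝ | ∀ i, 0 < x i} g :=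
        hcv.comp_linearMap (WithLp.linearEquiv 2 ℝ (Fin n → ℝ)).symm.toLinearMap
    refine ⟨?_, ?_⟩
    · intro A hA B hB a b ha hb hab
      obtain rfl | ha' := ha.eq_or_lt
      · have : b = 1 := by linarith
        subst this
        simpa using hB
      obtain rfl | hb' := hb.eq_or_lt
      · have : a = 1 := by linarith
        subst this
        simpa using hA
      exact (posdef_smul hA ha').add (posdef_smul hB hb')
    · intro A hApd B hBpd a b ha hb hab
      obtain rfl | ha' := ha.eq_or_lt
      · have : b = 1 := by linarith
        subst this
        simp
      obtain rfl | hb' := hb.eq_or_lt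
      · have : a = 1 := by linarith
        subst this
        simp
      have hApd : A.PosDef := hApd
      have hBpd : B.PosDef := hBpd
      set C : Matrix (Fin n) (Fin n) ℝ := a • A + b • B with hC_def
      have hCpd : C.PosDef := (posdef_smul hApd ha').add (posdef_smul hBpd hb')
      set Vm : Matrix (Fin n) (Fin n) ℝ :=
        (hCpd.1.eigenvectorUnitary : Matrix (Fin n) (Fin n) ℝ) with hVm_def
      set u : Fin n → ℝ := fun i => (star Vm * A * Vm) i i with hu_def
      set w : Fin n → ℝ := fun i => (star Vm * B * Vm) i i with hw_def
      have hu : ∀ i, 0 < u i := fun i => conj_diag_entry_pos hApd hCpd.1.eigenvectorUnitary i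
      have hw : ∀ i, 0 < w i := fun i => conj_diag_entry_pos hBpd hCpd.1.eigenvectorUnitary i
      have hmu : ∀ i, hCpd.1.eigenvalues i = a * u i + b * w i := by
        intro i
        have hd := star_mul_self_mul_real hCpd.1
        have hsplit : star Vm * C * Vm
            = a • (star Vm * A * Vm) + b • (star Vm * B * Vm) := by
          rw [hC_def, Matrix.mul_add, Matrix.add_mul, mul_smul_comm, mul_smul_comm,
            smul_mul_assoc, smul_mul_assoc]
        have h2 : (star Vm * C * Vm) i i = hCpd.1.eigenvalues i := by
          rw [hd, Matrix.diagonal_apply_eq]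
        rw [← h2, hsplit]
        simp [Matrix.add_apply, Matrix.smul_apply, smul_eq_mul, hu_def, hw_def]
      have schur : ∀ {M : Matrix (Fin n) (Fin n) ℝ} (hMpd : M.PosDef),
          g (hMpd.1.eigenvalues) ≤ g (fun i => (star Vm * M * Vm) i i) := by
        intro M hMpd
        set Q : Matrix (Fin n) (Fin n) ℝ :=
          star Vm * (hMpd.1.eigenvectorUnitary : Matrix (Fin n) (Fin n) ℝ) with hQ_def
        have hQmem : Q ∈ Matrix.unitaryGroup (Fin n) ℝ := by
          have h := (star hCpd.1.eigenvectorUnitary * hMpd.1.eigenvectorUnitary).2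
          rwa [Submonoid.coe_mul, Unitary.coe_star] at h
        have hform : star Vm * M * Vm = Q * diagonal hMpd.1.eigenvalues * star Q := by
          have h1 : star Vm * ((hMpd.1.eigenvectorUnitary : Matrix (Fin n) (Fin n) ℝ)
              * diagonal hMpd.1.eigenvalues
              * star (hMpd.1.eigenvectorUnitary : Matrix (Fin n) (Fin n) ℝ)) * Vm
              = Q * diagonal hMpd.1.eigenvalues * star Q := by
            rw [hQ_def, StarMul.star_mul, star_star]
            simp only [Matrix.mul_assoc]
          rwa [← spectral_real hMpd.1] at h1
        have hentry : (fun i => (star Vm * M * Vm) i i)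
            = (Matrix.of fun i k => (Q i k) ^ 2) *ᵥ hMpd.1.eigenvalues := by
          funext i
          rw [hform, conj_diag_entry_eq]
          simp [Matrix.mulVec, dotProduct, Matrix.of_apply]
        have := schur_horn_ineq hg hgsym (sq_unitary_mem_doublyStochastic hQmem)
          (fun i => hMpd.eigenvalues_pos i)
        rwa [← hentry] at this
      have key1 := schur hApd
      have key2 := schur hBpd
      have hconc := hg.2 (show u ∈ _ from hu) (show w ∈ _ from hw) ha'.le hb'.le hab
      show a • (- γM A⁻¹) + b • (- γM B⁻¹) ≤ - γM C⁻¹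
      rw [hval hApd, hval hBpd, hval hCpd]
      have heig : hCpd.1.eigenvalues = fun i => a * u i + b * w i := funext hmu
      have hq : (a • u + b • w) = fun i => a * u i + b * w i := rfl
      calc a • g hApd.1.eigenvalues + b • g hBpd.1.eigenvalues
          ≤ a • g u + b • g w := by
            simp only [smul_eq_mul]
            exact add_le_add (mul_le_mul_of_nonneg_left key1 ha'.le)
              (mul_le_mul_of_nonneg_left key2 hb'.le)
        _ ≤ g (a • u + b • w) := hconc
        _ = g (hCpd.1.eigenvalues) := by rw [hq, heig]
  · -- matrix concavity ⇒ eigenvalue concavity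
    intro hM
    have hDval : ∀ (z : Fin n → ℝ), (∀ i, 0 < z i) → - γM (diagonal z)⁻¹ = g z := by
      intro z hz0
      have hinv : (diagonal z)⁻¹ = diagonal (fun i => (z i)⁻¹) := by
        apply Matrix.inv_eq_right_inv
        rw [Matrix.diagonal_mul_diagonal,
          show (fun i => z i * (z i)⁻¹) = fun _ => (1:ℝ) from
            funext fun i => mul_inv_cancel₀ (hz0 i).ne']
        exact Matrix.diagonal_one
      have hzpos : ∀ i, 0 < (z i)⁻¹ := fun i => inv_pos.mpr (hz0 i)
      have hDpd : (diagonal (fun i => (z i)⁻¹)).PosDef := Matrix.PosDef.diagonal hzpos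
      rw [hinv, hγeig hDpd.1 _ hzpos (eig_diagonal_perm hDpd.1)]
    have hres : ConcaveOn ℝ {x : Fin n → ℝ | ∀ i, 0 < x i} g := by
      refine ⟨?_, ?_⟩
      · intro x hx y hy a b ha hb hab i
        show 0 < a * x i + b * y i
        obtain rfl | ha' := ha.eq_or_lt
        · have : b = 1 := by linarith
          subst this
          simpa using hy i
        · exact add_pos_of_pos_of_nonneg (mul_pos ha' (hx i))
            (mul_nonneg hb (hy i).le)
      · intro x hx y hy a b ha hb hab
        have hDx : (diagonal x).PosDef := Matrix.PosDef.diagonal hx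
        have hDy : (diagonal y).PosDef := Matrix.PosDef.diagonal hy
        have key := hM.2 (show diagonal x ∈ _ from hDx) (show diagonal y ∈ _ from hDy)
          ha hb hab
        have hz : a • diagonal x + b • diagonal y
            = diagonal (fun i => a * x i + b * y i) := by
          ext i j
          by_cases h : i = j
          · subst h; simp [Matrix.diagonal_apply_eq]
          · simp [Matrix.diagonal_apply_ne _ h]
        have hxy : ∀ i, 0 < a * x i + b * y i := by
          intro i
          obtain rfl | ha' := ha.eq_or_lt
          · have : b = 1 := by linarith
            subst this
            simpa using hy i
          · exact add_pos_of_pos_of_nonneg (mul_pos ha' (hx i))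
              (mul_nonneg hb (hy i).le)
        rw [hz] at key
        have key' : a • (- γM (diagonal x)⁻¹) + b • (- γM (diagonal y)⁻¹)
            ≤ - γM (diagonal (fun i => a * x i + b * y i))⁻¹ := key
        rw [hDval x hx, hDval y hy, hDval _ hxy] at key'
        exact key'
    exact hres.comp_linearMap (WithLp.linearEquiv 2 ℝ (Fin n → ℝ)).toLinearMap
end
end

section
/- Let k ≥ 2 and m ≥ k + 1. The function λ ↦ σ_k(λ)/σ_{k−1}(λ) on ℝ^m_+, where σ_j denotes the j-th elementary symmetric polynomial in m variables, is strictly inverse-concave. -/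
noncomputable section

/-- The `k`-th elementary symmetric polynomial `σ_k(λ) = Σ_{i₁<⋯<i_k} λ_{i₁} ⋯ λ_{i_k}`. -/
def esymm (m k : ℕ) (x : Fin m → ℝ) : ℝ :=
  ∑ T ∈ Finset.powersetCard k (Finset.univ : Finset (Fin m)), ∏ i ∈ T, x i

/-!
Substituting `λ = x⁻¹` turns `σ_k / σ_{k-1}` into `1 / q_l`, where `q_n = σ_{n+1} / σ_n`
(`Finset.esymmRatio`) and `l = m - k ≥ 1`; so it suffices that `-1 / q_l` is strictly concave on
the positive orthant. Each `q_n` is 1-homogeneous and superadditive (Marcus–Lopes), strictly so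
on non-proportional arguments when `n ≥ 1`: by
`(n + 2) q_{n+1}(x) = ∑ xᵢ - ∑ xᵢ² / (q_n⁽ⁱ⁾(x) + xᵢ)`, where `q_n⁽ⁱ⁾` is `q_n` in the variables
other than `xᵢ`, superadditivity passes from `q_n⁽ⁱ⁾` to `q_{n+1}` through
`(a + b)² / (p + q) ≤ a² / p + b² / q`. Concavity of `-1 / q_l` follows as `t ↦ -1 / t` is
concave and increasing; strictness comes from strict convexity of `t ↦ 1 / t` when
`q_l x ≠ q_l y`, and from strict superadditivity when `q_l x = q_l y` but `x ≠ y`.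
-/

section AddSqDiv

variable {K : Type*} [Field K] [LinearOrder K] [IsStrictOrderedRing K] {a b p q r : K}

lemma add_sq_div_le_of_add_le (hp : 0 < p) (hq : 0 < q) (hr : p + q ≤ r) :
    (a + b) ^ 2 / r ≤ a ^ 2 / p + b ^ 2 / q := by
  calc (a + b) ^ 2 / r ≤ (a + b) ^ 2 / (p + q) := by gcongr
    _ ≤ a ^ 2 / p + b ^ 2 / q := by
      rw [div_add_div _ _ hp.ne' hq.ne', div_le_div_iff₀ (by positivity) (by positivity)]
      nlinarith [sq_nonneg (a * q - b * p)]

lemma add_sq_div_lt_of_add_lt (hab : a + b ≠ 0) (hp : 0 < p) (hq : 0 < q) (hr : p + q < r) :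
    (a + b) ^ 2 / r < a ^ 2 / p + b ^ 2 / q :=
  calc (a + b) ^ 2 / r < (a + b) ^ 2 / (p + q) := by gcongr
    _ ≤ a ^ 2 / p + b ^ 2 / q := add_sq_div_le_of_add_le hp hq le_rfl

lemma add_sq_div_lt_of_mul_ne (hp : 0 < p) (hq : 0 < q) (hr : p + q ≤ r) (h : a * q ≠ b * p) :
    (a + b) ^ 2 / r < a ^ 2 / p + b ^ 2 / q := by
  calc (a + b) ^ 2 / r ≤ (a + b) ^ 2 / (p + q) := by gcongr
    _ < a ^ 2 / p + b ^ 2 / q := by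
      rw [div_add_div _ _ hp.ne' hq.ne', div_lt_div_iff₀ (by positivity) (by positivity)]
      nlinarith [sq_pos_of_ne_zero (sub_ne_zero.2 h)]

end AddSqDiv

lemma inv_lt_mul_inv_add_mul_inv {a b p q r : ℝ} (hp : 0 < p) (hq : 0 < q) (ha : 0 < a)
    (hb : 0 < b) (hab : a + b = 1) (hr : a * p + b * q ≤ r) (h : a * p + b * q < r ∨ p ≠ q) :
    r⁻¹ < a * p⁻¹ + b * q⁻¹ := by
  have hinv : StrictConvexOn ℝ (Set.Ioi 0) fun t : ℝ => t⁻¹ := by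
    simpa using strictConvexOn_zpow (m := -1) (by norm_num) (by norm_num)
  have hpq : 0 < a * p + b * q := by positivity
  rcases h with h | h
  · calc r⁻¹ < (a * p + b * q)⁻¹ := inv_strictAnti₀ hpq h
      _ ≤ a * p⁻¹ + b * q⁻¹ := hinv.convexOn.2 hp hq ha.le hb.le hab
  · calc r⁻¹ ≤ (a * p + b * q)⁻¹ := inv_anti₀ hpq hr
      _ < a * p⁻¹ + b * q⁻¹ := hinv.2 hp hq h ha hb hab

lemma eq_smul_of_mul_eq_mul {ι K : Type*} [Field K] {x y : ι → K} {j : ι} (hy : y j ≠ 0)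
    (h : ∀ i, x i * y j = x j * y i) : x = (x j / y j) • y := by
  ext i
  rw [Pi.smul_apply, smul_eq_mul, div_mul_eq_mul_div, eq_div_iff hy, h]

lemma convex_setOf_forall_pos {ι : Type*} : Convex ℝ {x : ι → ℝ | ∀ i, 0 < x i} := by
  simpa [Set.pi] using convex_pi (s := Set.univ) fun (_ : ι) _ => convex_Ioi (0 : ℝ)

namespace Finset

variable {ι : Type*}

def esymm {R : Type*} [CommSemiring R] (s : Finset ι) (j : ℕ) (x : ι → R) : R :=
  ∑ t ∈ s.powersetCard j, ∏ i ∈ t, x i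

section CommSemiring

variable {R : Type*} [CommSemiring R] (s : Finset ι) (x : ι → R)

lemma esymm_zero : s.esymm 0 x = 1 := by
  simp [esymm]

lemma esymm_one : s.esymm 1 x = ∑ i ∈ s, x i := by
  simp [esymm, powersetCard_one]

lemma esymm_smul (j : ℕ) (c : R) : s.esymm j (c • x) = c ^ j * s.esymm j x := by
  rw [esymm, esymm, mul_sum]
  refine sum_congr rfl fun t ht => ?_
  rw [← (mem_powersetCard.1 ht).2, ← prod_const, ← prod_mul_distrib]
  rfl

variable [DecidableEq ι]

lemma esymm_succ_of_mem {i : ι} (hi : i ∈ s) (j : ℕ) :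
    s.esymm (j + 1) x = (s.erase i).esymm (j + 1) x + x i * (s.erase i).esymm j x := by
  conv_lhs => rw [← insert_erase hi]
  rw [esymm, powersetCard_succ_insert (notMem_erase i s), sum_union, sum_image, esymm, esymm,
    mul_sum]
  · congr 1
    refine sum_congr rfl fun t ht => prod_insert fun hit => ?_
    exact notMem_erase i s ((mem_powersetCard.1 ht).1 hit)
  · intro t ht u hu htu
    have hit : i ∉ t := fun h => notMem_erase i s ((mem_powersetCard.1 ht).1 h)
    have hiu : i ∉ u := fun h => notMem_erase i s ((mem_powersetCard.1 hu).1 h)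
    rw [← erase_insert hit, ← erase_insert hiu, htu]
  · refine disjoint_left.2 fun t ht ht' => ?_
    obtain ⟨u, -, rfl⟩ := mem_image.1 ht'
    exact notMem_erase i s ((mem_powersetCard.1 ht).1 (mem_insert_self i u))

lemma sum_mul_esymm_erase (j : ℕ) :
    ∑ i ∈ s, x i * (s.erase i).esymm j x = (j + 1) * s.esymm (j + 1) x := by
  have hcount : ∀ u ∈ s.powersetCard (j + 1), ∑ _i ∈ u, ∏ a ∈ u, x a = (j + 1) * ∏ a ∈ u, x a :=
    fun u hu => by simp [(mem_powersetCard.1 hu).2]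
  simp only [esymm, mul_sum, ← sum_congr rfl hcount]
  rw [sum_sigma', sum_sigma']
  refine sum_nbij' (fun p => ⟨insert p.1 p.2, p.1⟩) (fun p => ⟨p.2, p.1.erase p.2⟩)
    ?_ ?_ ?_ ?_ ?_
  · simp only [mem_sigma, mem_powersetCard, mem_insert_self, and_true]
    grind
  · simp only [mem_sigma, mem_powersetCard]
    grind
  · rintro ⟨i, t⟩ h
    simp only [mem_sigma, mem_powersetCard] at h
    rw [erase_insert fun hit => notMem_erase i s (h.2.1 hit)]
  · rintro ⟨u, i⟩ h
    rw [insert_erase (mem_sigma.1 h).2]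
  · rintro ⟨i, t⟩ h
    simp only [mem_sigma, mem_powersetCard] at h
    rw [prod_insert fun hit => notMem_erase i s (h.2.1 hit)]

end CommSemiring

section CommRing

variable {R : Type*} [CommRing R] [DecidableEq ι] (s : Finset ι) (x : ι → R)

lemma add_two_mul_esymm_add_two (n : ℕ) :
    (n + 2) * s.esymm (n + 2) x
      = (∑ i ∈ s, x i) * s.esymm (n + 1) x - ∑ i ∈ s, x i ^ 2 * (s.erase i).esymm n x := by
  have h := sum_mul_esymm_erase s x (n + 1)
  have hterm : ∀ i ∈ s, x i * (s.erase i).esymm (n + 1) x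
      = x i * s.esymm (n + 1) x - x i ^ 2 * (s.erase i).esymm n x := fun i hi => by
    rw [esymm_succ_of_mem s x hi]
    ring
  rw [sum_congr rfl hterm, sum_sub_distrib, ← sum_mul] at h
  push_cast at h
  linear_combination -h

end CommRing

section Field

variable {K : Type*} [Field K] {s : Finset ι} {x : ι → K} {n : ℕ}

def esymmRatio (s : Finset ι) (n : ℕ) (x : ι → K) : K := s.esymm (n + 1) x / s.esymm n x

lemma esymmRatio_zero (s : Finset ι) (x : ι → K) : s.esymmRatio 0 x = ∑ i ∈ s, x i := by
  rw [esymmRatio, esymm_zero, div_one, esymm_one]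

lemma esymmRatio_smul {c : K} (hc : c ≠ 0) : s.esymmRatio n (c • x) = c * s.esymmRatio n x := by
  rw [esymmRatio, esymmRatio, esymm_smul, esymm_smul, pow_succ, mul_assoc,
    mul_div_mul_left _ _ (pow_ne_zero n hc), mul_div_assoc]

variable [DecidableEq ι]

lemma esymm_inv_mul_prod (hx : ∀ i ∈ s, x i ≠ 0) (hn : n ≤ #s) :
    s.esymm n (fun i => (x i)⁻¹) * ∏ i ∈ s, x i = s.esymm (#s - n) x := by
  rw [esymm, esymm, sum_mul]
  refine sum_nbij' (s \ ·) (s \ ·) ?_ ?_ ?_ ?_ ?_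
  · intro t ht
    rw [mem_powersetCard] at ht ⊢
    exact ⟨sdiff_subset, by rw [card_sdiff_of_subset ht.1, ht.2]⟩
  · intro t ht
    rw [mem_powersetCard] at ht ⊢
    exact ⟨sdiff_subset, by rw [card_sdiff_of_subset ht.1, ht.2]; omega⟩
  · exact fun t ht => sdiff_sdiff_eq_self (mem_powersetCard.1 ht).1
  · exact fun t ht => sdiff_sdiff_eq_self (mem_powersetCard.1 ht).1
  · intro t ht
    have hts := (mem_powersetCard.1 ht).1
    have hprod : ∏ i ∈ t, x i ≠ 0 := prod_ne_zero_iff.2 fun i hi => hx i (hts hi)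
    rw [← prod_sdiff hts, prod_inv_distrib, mul_left_comm, inv_mul_cancel₀ hprod, mul_one]

lemma esymmRatio_inv (hx : ∀ i ∈ s, x i ≠ 0) (hn : n + 1 ≤ #s) :
    s.esymmRatio n (fun i => (x i)⁻¹) = (s.esymmRatio (#s - (n + 1)) x)⁻¹ := by
  have hprod : ∏ i ∈ s, x i ≠ 0 := prod_ne_zero_iff.2 hx
  rw [esymmRatio, esymmRatio, inv_div, ← mul_div_mul_right _ _ hprod, esymm_inv_mul_prod hx hn,
    esymm_inv_mul_prod hx (by omega), show #s - n = #s - (n + 1) + 1 by omega]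

end Field

lemma esymm_pos {R : Type*} [CommSemiring R] [PartialOrder R] [IsStrictOrderedRing R]
    {s : Finset ι} {x : ι → R} (hx : ∀ i ∈ s, 0 < x i) {n : ℕ} (hn : n ≤ #s) :
    0 < s.esymm n x := by
  obtain ⟨t, hts, ht⟩ := exists_subset_card_eq hn
  exact sum_pos (fun u hu => prod_pos fun i hi => hx i ((mem_powersetCard.1 hu).1 hi))
    ⟨t, mem_powersetCard.2 ⟨hts, ht⟩⟩

section LinearOrderedField

variable {K : Type*} [Field K] [LinearOrder K] [IsStrictOrderedRing K]
  {s : Finset ι} {x y : ι → K} {n : ℕ}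

lemma esymmRatio_pos (hx : ∀ i ∈ s, 0 < x i) (hn : n + 1 ≤ #s) : 0 < s.esymmRatio n x :=
  div_pos (esymm_pos hx hn) (esymm_pos hx (by omega))

lemma exists_mul_ne_mul_of_esymmRatio_eq [Fintype ι] (hx : ∀ i, 0 < x i) (hy : ∀ i, 0 < y i)
    (hn : n + 1 ≤ Fintype.card ι) (hxy : x ≠ y)
    (hq : univ.esymmRatio n x = univ.esymmRatio n y) :
    ∃ i ∈ univ, ∃ j ∈ univ, x i * y j ≠ x j * y i := by
  by_contra! h
  obtain ⟨j⟩ : Nonempty ι := Fintype.card_pos_iff.1 (by omega)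
  have hxy' : x = (x j / y j) • y :=
    eq_smul_of_mul_eq_mul (hy j).ne' fun i => h i (mem_univ i) j (mem_univ j)
  have hqy : 0 < univ.esymmRatio n y := esymmRatio_pos (fun i _ => hy i) (by simpa using hn)
  have hc : x j / y j = 1 := by
    have := esymmRatio_smul (s := univ) (n := n) (x := y) (div_ne_zero (hx j).ne' (hy j).ne')
    rw [← hxy', hq] at this
    exact (mul_eq_right₀ hqy.ne').1 this.symm
  exact hxy (hxy'.trans (by rw [hc, one_smul]))

variable [DecidableEq ι]

lemma esymmRatio_erase_add_pos (hx : ∀ i ∈ s, 0 < x i) {i : ι} (hi : i ∈ s)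
    (hn : n + 2 ≤ #s) : 0 < (s.erase i).esymmRatio n x + x i :=
  add_pos (esymmRatio_pos (fun j hj => hx j (mem_of_mem_erase hj))
    (by rw [card_erase_of_mem hi]; omega)) (hx i hi)

lemma esymm_div_esymm_erase {i : ι} (hi : i ∈ s) (hx : ∀ i ∈ s, 0 < x i) (hn : n + 1 ≤ #s) :
    s.esymm (n + 1) x / (s.erase i).esymm n x = (s.erase i).esymmRatio n x + x i := by
  have hpos : 0 < (s.erase i).esymm n x :=
    esymm_pos (fun j hj => hx j (mem_of_mem_erase hj)) (by rw [card_erase_of_mem hi]; omega)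
  rw [esymm_succ_of_mem s x hi, add_div, mul_div_assoc, div_self hpos.ne', mul_one, esymmRatio]

lemma add_two_mul_esymmRatio_succ (hx : ∀ i ∈ s, 0 < x i) (hn : n + 1 ≤ #s) :
    (n + 2) * s.esymmRatio (n + 1) x
      = ∑ i ∈ s, x i - ∑ i ∈ s, x i ^ 2 / ((s.erase i).esymmRatio n x + x i) := by
  have hpos : 0 < s.esymm (n + 1) x := esymm_pos hx hn
  have hterm : ∀ i ∈ s, x i ^ 2 / ((s.erase i).esymmRatio n x + x i)
      = x i ^ 2 * (s.erase i).esymm n x / s.esymm (n + 1) x := fun i hi => by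
    rw [← esymm_div_esymm_erase hi hx hn, div_div_eq_mul_div]
  rw [sum_congr rfl hterm, ← sum_div, eq_sub_iff_add_eq, ← eq_sub_iff_add_eq', esymmRatio,
    ← mul_div_assoc, div_eq_iff hpos.ne', sub_mul, div_mul_cancel₀ _ hpos.ne',
    add_two_mul_esymm_add_two]
  ring

lemma add_two_mul_esymmRatio_succ_sub_sub (hx : ∀ i ∈ s, 0 < x i) (hy : ∀ i ∈ s, 0 < y i)
    (hn : n + 1 ≤ #s) :
    (n + 2) * (s.esymmRatio (n + 1) (x + y) - s.esymmRatio (n + 1) x - s.esymmRatio (n + 1) y)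
      = ∑ i ∈ s, (x i ^ 2 / ((s.erase i).esymmRatio n x + x i)
          + y i ^ 2 / ((s.erase i).esymmRatio n y + y i)
          - (x i + y i) ^ 2 / ((s.erase i).esymmRatio n (x + y) + (x i + y i))) := by
  have hxy : ∀ i ∈ s, 0 < (x + y) i := fun i hi => add_pos (hx i hi) (hy i hi)
  rw [mul_sub, mul_sub, add_two_mul_esymmRatio_succ hx hn, add_two_mul_esymmRatio_succ hy hn,
    add_two_mul_esymmRatio_succ hxy hn]
  simp only [Pi.add_apply, sum_add_distrib, sum_sub_distrib]
  ring

theorem esymmRatio_add_esymmRatio_le (hx : ∀ i ∈ s, 0 < x i) (hy : ∀ i ∈ s, 0 < y i)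
    (hn : n + 1 ≤ #s) : s.esymmRatio n x + s.esymmRatio n y ≤ s.esymmRatio n (x + y) := by
  induction n generalizing s with
  | zero => simp [esymmRatio_zero, sum_add_distrib]
  | succ n ih =>
    suffices 0 ≤ (n + 2 : K) * (s.esymmRatio (n + 1) (x + y) - s.esymmRatio (n + 1) x
        - s.esymmRatio (n + 1) y) by
      linarith [nonneg_of_mul_nonneg_right this (by positivity)]
    rw [add_two_mul_esymmRatio_succ_sub_sub hx hy (by omega)]
    refine sum_nonneg fun i hi => sub_nonneg.2 ?_
    have hsup := ih (s := s.erase i) (fun j hj => hx j (mem_of_mem_erase hj))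
      (fun j hj => hy j (mem_of_mem_erase hj)) (by rw [card_erase_of_mem hi]; omega)
    exact add_sq_div_le_of_add_le (esymmRatio_erase_add_pos hx hi hn)
      (esymmRatio_erase_add_pos hy hi hn) (by linarith)

lemma esymmRatio_erase_add_le (hx : ∀ i ∈ s, 0 < x i) (hy : ∀ i ∈ s, 0 < y i) {i : ι}
    (hi : i ∈ s) (hn : n + 2 ≤ #s) :
    (s.erase i).esymmRatio n x + x i + ((s.erase i).esymmRatio n y + y i)
      ≤ (s.erase i).esymmRatio n (x + y) + (x i + y i) := by
  have := esymmRatio_add_esymmRatio_le (fun j hj => hx j (mem_of_mem_erase hj))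
    (fun j hj => hy j (mem_of_mem_erase hj)) (by rw [card_erase_of_mem hi]; omega : n + 1 ≤ _)
  linarith

lemma esymmRatio_add_esymmRatio_lt_of_exists (hx : ∀ i ∈ s, 0 < x i) (hy : ∀ i ∈ s, 0 < y i)
    (hn : n + 2 ≤ #s)
    (h : ∃ i ∈ s, (x i + y i) ^ 2 / ((s.erase i).esymmRatio n (x + y) + (x i + y i))
      < x i ^ 2 / ((s.erase i).esymmRatio n x + x i)
        + y i ^ 2 / ((s.erase i).esymmRatio n y + y i)) :
    s.esymmRatio (n + 1) x + s.esymmRatio (n + 1) y < s.esymmRatio (n + 1) (x + y) := by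
  suffices 0 < (n + 2 : K) * (s.esymmRatio (n + 1) (x + y) - s.esymmRatio (n + 1) x
      - s.esymmRatio (n + 1) y) by
    linarith [pos_of_mul_pos_right this (by positivity)]
  rw [add_two_mul_esymmRatio_succ_sub_sub hx hy (by omega)]
  refine sum_pos' (fun i hi => sub_nonneg.2 ?_) (h.imp fun i ⟨hi, hlt⟩ => ⟨hi, sub_pos.2 hlt⟩)
  exact add_sq_div_le_of_add_le (esymmRatio_erase_add_pos hx hi hn)
    (esymmRatio_erase_add_pos hy hi hn) (esymmRatio_erase_add_le hx hy hi hn)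

theorem esymmRatio_add_esymmRatio_lt (hx : ∀ i ∈ s, 0 < x i) (hy : ∀ i ∈ s, 0 < y i)
    (hxy : ∃ i ∈ s, ∃ j ∈ s, x i * y j ≠ x j * y i) (hn : n + 2 ≤ #s) :
    s.esymmRatio (n + 1) x + s.esymmRatio (n + 1) y < s.esymmRatio (n + 1) (x + y) := by
  induction n generalizing s with
  | zero =>
    -- every `q₀⁽ⁱ⁾(x) + xᵢ` equals `∑ x`, so strictness comes from the equality case of
    -- Cauchy–Schwarz in `add_sq_div_le_of_add_le`
    refine esymmRatio_add_esymmRatio_lt_of_exists hx hy hn ?_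
    have hsum : ∀ z : ι → K, ∀ i ∈ s, (s.erase i).esymmRatio 0 z + z i = ∑ j ∈ s, z j :=
      fun z i hi => by rw [esymmRatio_zero, sum_erase_add _ _ hi]
    have hSy : 0 < ∑ j ∈ s, y j := sum_pos hy (card_pos.1 (by omega))
    obtain ⟨l, hls, hl⟩ : ∃ l ∈ s, x l * ∑ j ∈ s, y j ≠ y l * ∑ j ∈ s, x j := by
      by_contra! h
      obtain ⟨i, hi, j, hj, hij⟩ := hxy
      refine hij (mul_right_cancel₀ hSy.ne' ?_)
      linear_combination y j * h i hi - y i * h j hj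
    refine ⟨l, hls, add_sq_div_lt_of_mul_ne (esymmRatio_erase_add_pos hx hls hn)
      (esymmRatio_erase_add_pos hy hls hn) (esymmRatio_erase_add_le hx hy hls hn) ?_⟩
    rwa [hsum x l hls, hsum y l hls]
  | succ n ih =>
    obtain ⟨i, hi, j, hj, hij⟩ := hxy
    obtain ⟨l, hl⟩ : ((s.erase i).erase j).Nonempty := by
      rw [← card_pos]
      have := pred_card_le_card_erase (s := s.erase i) (a := j)
      have := pred_card_le_card_erase (s := s) (a := i)
      omega
    have hli : l ≠ i := fun h => by simp [h] at hl
    have hlj : l ≠ j := fun h => by simp [h] at hl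
    have hls : l ∈ s := mem_of_mem_erase (mem_of_mem_erase hl)
    have hsup := ih (s := s.erase l) (fun j hj => hx j (mem_of_mem_erase hj))
      (fun j hj => hy j (mem_of_mem_erase hj))
      ⟨i, mem_erase.2 ⟨hli.symm, hi⟩, j, mem_erase.2 ⟨hlj.symm, hj⟩, hij⟩
      (by rw [card_erase_of_mem hls]; omega)
    refine esymmRatio_add_esymmRatio_lt_of_exists hx hy hn ⟨l, hls, ?_⟩
    exact add_sq_div_lt_of_add_lt (add_pos (hx l hls) (hy l hls)).ne'
      (esymmRatio_erase_add_pos hx hls hn) (esymmRatio_erase_add_pos hy hls hn) (by linarith)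

end LinearOrderedField

theorem strictConcaveOn_neg_inv_esymmRatio [Fintype ι] [DecidableEq ι] {n : ℕ} (hn : 1 ≤ n)
    (hnι : n + 1 ≤ Fintype.card ι) :
    StrictConcaveOn ℝ {x : ι → ℝ | ∀ i, 0 < x i} fun x => -(univ.esymmRatio n x)⁻¹ := by
  refine ⟨convex_setOf_forall_pos, fun x hx y hy hxy a b ha hb hab => ?_⟩
  have hax : ∀ i ∈ univ, 0 < (a • x) i := fun i _ => mul_pos ha (hx i)
  have hby : ∀ i ∈ univ, 0 < (b • y) i := fun i _ => mul_pos hb (hy i)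
  have hcard : n + 1 ≤ #(univ : Finset ι) := by rwa [card_univ]
  have hsup : a * univ.esymmRatio n x + b * univ.esymmRatio n y
      ≤ univ.esymmRatio n (a • x + b • y) := by
    rw [← esymmRatio_smul ha.ne', ← esymmRatio_smul hb.ne']
    exact esymmRatio_add_esymmRatio_le hax hby hcard
  have hstrict : a * univ.esymmRatio n x + b * univ.esymmRatio n y
      < univ.esymmRatio n (a • x + b • y) ∨ univ.esymmRatio n x ≠ univ.esymmRatio n y := by
    refine or_iff_not_imp_right.2 fun hq => ?_
    obtain ⟨i, hi, j, hj, hij⟩ := exists_mul_ne_mul_of_esymmRatio_eq hx hy hnι hxy (not_not.1 hq)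
    obtain ⟨n, rfl⟩ : ∃ n', n = n' + 1 := ⟨n - 1, by omega⟩
    rw [← esymmRatio_smul ha.ne', ← esymmRatio_smul hb.ne']
    refine esymmRatio_add_esymmRatio_lt hax hby ⟨i, hi, j, hj, fun h => hij ?_⟩ hcard
    simp only [Pi.smul_apply, smul_eq_mul] at h
    exact mul_left_cancel₀ (mul_ne_zero ha.ne' hb.ne') (by linear_combination h)
  have := inv_lt_mul_inv_add_mul_inv (esymmRatio_pos (fun i _ => hx i) hcard)
    (esymmRatio_pos (fun i _ => hy i) hcard) ha hb hab hsup hstrict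
  simp only [smul_eq_mul, mul_neg]
  linarith

end Finset

/-- for `k ≥ 2` and `m ≥ k + 1`, the ratio `σ_k/σ_{k-1}` is strictly
inverse-concave on `ℝ^m_+`. -/
theorem stmt14 (m k : ℕ) (hk : 2 ≤ k) (hm : k + 1 ≤ m) :
    StrictInvConcave m (fun x => esymm m k x / esymm m (k - 1) x) := by
  have hk1 : k - 1 + 1 = k := by omega
  have hratio : ∀ y, esymm m k y / esymm m (k - 1) y = Finset.univ.esymmRatio (k - 1) y :=
    fun y => by rw [Finset.esymmRatio, hk1]; rfl
  refine (Finset.strictConcaveOn_neg_inv_esymmRatio (ι := Fin m) (n := m - k) (by omega)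
    (by simp; omega)).congr fun x hx => ?_
  dsimp only
  rw [hratio, Finset.esymmRatio_inv (fun i _ => (hx i).ne') (by simp; omega), Finset.card_univ,
    Fintype.card_fin, hk1]
end
end
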